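/- For every integer d ≤ 4 with d ≥ 2, the only solution t ∈ [0,1] to F_d(t) = −t is t = 0, where F_d(t) = −(1/(d+1))·(d·coth(d·artanh(t)) − 1/t) extended by F_d(0)=0. -/

import Mathlib

/-- Hyperbolic cotangent. -/
noncomputable def coth (x : ℝ) : ℝ := Real.cosh x / Real.sinh x

/-- Inverse hyperbolic tangent. -/
noncomputable def artanh (x : ℝ) : ℝ := (1 / 2) * Real.log ((1 + x) / (1 - x))

/-- The AKLT single-site transfer function `F_d`, extended by `F_d 0 = 0`. -/
noncomputable def F (D t : ℝ) : ℝ :=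
  if t = 0 then 0 else -(1 / (D + 1)) * (D * coth (D * artanh t) - 1 / t)

/-!
With `a = (1 + t)^d` and `b = (1 - t)^d`, the identity `exp (2 artanh t) = (1 + t) / (1 - t)` turns
`coth (d artanh t)` into `(a + b) / (a - b)`, so for `0 < t < 1` the equation `F_d t = -t` becomes
the polynomial equation `((d + 1) t² + 1) (a - b) = d t (a + b)`. For `d = 2, 3, 4` the difference
of the two sides is `8 t³`, `8 t³ + 8 t⁵` and `32 t⁵`, hence positive. At `t = 1` the junk values
`log 0 = 0` and `sinh 0 = 0` give `F_d 1 = 1 / (d + 1) ≠ -1`.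
-/

open Real hiding artanh

lemma coth_eq_exp (x : ℝ) : coth x = (exp (2 * x) + 1) / (exp (2 * x) - 1) := by
  have h2x : exp (2 * x) = exp x * exp x := by rw [← exp_add, two_mul]
  have hinv : exp x * exp (-x) = 1 := by rw [← exp_add, add_neg_cancel, exp_zero]
  have hne : 2 * exp x ≠ 0 := by positivity
  rw [coth, cosh_eq, sinh_eq, ← mul_div_mul_left _ _ hne, h2x]
  congr 1
  · linear_combination hinv
  · linear_combination -hinv

lemma exp_two_mul_artanh {t : ℝ} (ht : |t| < 1) : exp (2 * artanh t) = (1 + t) / (1 - t) := by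
  obtain ⟨hlo, hhi⟩ := abs_lt.mp ht
  have hpos : 0 < (1 + t) / (1 - t) := div_pos (by linarith) (by linarith)
  rw [artanh, ← mul_assoc, mul_one_div_cancel two_ne_zero, one_mul, exp_log hpos]

lemma coth_natCast_mul_artanh (n : ℕ) {t : ℝ} (ht : |t| < 1) :
    coth (n * artanh t) = ((1 + t) ^ n + (1 - t) ^ n) / ((1 + t) ^ n - (1 - t) ^ n) := by
  have hb : (1 - t) ^ n ≠ 0 := pow_ne_zero _ (by linarith [(abs_lt.mp ht).2])
  rw [coth_eq_exp, mul_left_comm, exp_nat_mul, exp_two_mul_artanh ht, div_pow,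
    div_add_one hb, div_sub_one hb, div_div_div_cancel_right₀ hb]

lemma one_add_pow_ne_one_sub_pow {n : ℕ} (hn : n ≠ 0) {t : ℝ} (ht0 : t ≠ 0) (ht : |t| < 1) :
    (1 + t) ^ n ≠ (1 - t) ^ n := by
  obtain ⟨hlo, hhi⟩ := abs_lt.mp ht
  rw [Ne, pow_left_inj₀ (by linarith) (by linarith) hn]
  intro h
  exact ht0 (by linarith)

lemma artanh_one : artanh 1 = 0 := by
  simp [artanh]

lemma F_one (D : ℝ) : F D 1 = 1 / (D + 1) := by
  simp [F, artanh_one, coth]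

def fixedPointPoly (d : ℕ) (t : ℝ) : ℝ :=
  ((d + 1) * t ^ 2 + 1) * ((1 + t) ^ d - (1 - t) ^ d) - d * t * ((1 + t) ^ d + (1 - t) ^ d)

lemma F_add_self_eq {d : ℕ} (hd : d ≠ 0) {t : ℝ} (ht0 : t ≠ 0) (ht : |t| < 1) :
    F d t + t = fixedPointPoly d t / ((d + 1) * t * ((1 + t) ^ d - (1 - t) ^ d)) := by
  have hab : (1 + t) ^ d - (1 - t) ^ d ≠ 0 :=
    sub_ne_zero.mpr (one_add_pow_ne_one_sub_pow hd ht0 ht)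
  have hd1 : (d : ℝ) + 1 ≠ 0 := by positivity
  rw [F, if_neg ht0, coth_natCast_mul_artanh d ht, fixedPointPoly]
  field_simp
  ring

-- For `d = 5` the lowest-order term is `-20 t³`, so `F_5` has a nonzero fixed point.
lemma fixedPointPoly_pos {d : ℕ} (hd2 : 2 ≤ d) (hd4 : d ≤ 4) {t : ℝ} (ht : 0 < t) :
    0 < fixedPointPoly d t := by
  interval_cases d <;>
  · simp only [fixedPointPoly]
    push_cast
    ring_nf
    positivity

lemma neg_lt_F {d : ℕ} (hd2 : 2 ≤ d) (hd4 : d ≤ 4) {t : ℝ} (ht0 : 0 < t) (ht1 : t < 1) :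
    -t < F d t := by
  have ht : |t| < 1 := abs_lt.mpr ⟨by linarith, ht1⟩
  have hab : (1 - t) ^ d < (1 + t) ^ d := pow_lt_pow_left₀ (by linarith) (by linarith) (by omega)
  have hsum : 0 < F d t + t := by
    rw [F_add_self_eq (by omega) ht0.ne' ht]
    exact div_pos (fixedPointPoly_pos hd2 hd4 ht0) (by have := sub_pos.mpr hab; positivity)
  linarith

theorem stmt_10 (d : ℕ) (hd2 : 2 ≤ d) (hd4 : d ≤ 4) :
    ∀ t ∈ Set.Icc (0 : ℝ) 1, F (d : ℝ) t = -t → t = 0 := by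
  rintro t ⟨ht0, ht1⟩ hfix
  by_contra hne
  rcases ht1.lt_or_eq with ht1 | rfl
  · exact (neg_lt_F hd2 hd4 (ht0.lt_of_ne' hne) ht1).ne' hfix
  · rw [F_one] at hfix
    have : (0 : ℝ) < 1 / (d + 1) := by positivity
    linarith
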